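/- Let G be a connected graph and w a positive weight function such that s(G,w) < cs(G,w), and let S be a minimum weighted safe set of (G,w). Then G−S is disconnected. -/

import Mathlib

open SimpleGraph
open scoped Classical

variable {V : Type*} [Fintype V]

noncomputable def setWeight (w : V → ℝ) (A : Set V) : ℝ :=
  ∑ v : V, if v ∈ A then w v else 0

def IsComponentOf (G : SimpleGraph V) (S C : Set V) : Prop :=
  ∃ c : (G.induce S).ConnectedComponent,
    C = Subtype.val '' {x : ↥S | (G.induce S).connectedComponentMk x = c}

def Touches (G : SimpleGraph V) (C D : Set V) : Prop :=
  ∃ a ∈ C, ∃ b ∈ D, G.Adj a b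

def IsSafeSet (G : SimpleGraph V) (w : V → ℝ) (S : Set V) : Prop :=
  S.Nonempty ∧ S ≠ Set.univ ∧
    ∀ C D : Set V, IsComponentOf G S C → IsComponentOf G Sᶜ D → Touches G C D →
      setWeight w D ≤ setWeight w C

def IsConnSafeSet (G : SimpleGraph V) (w : V → ℝ) (S : Set V) : Prop :=
  IsSafeSet G w S ∧ (G.induce S).Connected

noncomputable def safeNumber (G : SimpleGraph V) (w : V → ℝ) : ℝ :=
  sInf (setWeight w '' {S | IsSafeSet G w S})

noncomputable def connSafeNumber (G : SimpleGraph V) (w : V → ℝ) : ℝ :=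
  sInf (setWeight w '' {S | IsConnSafeSet G w S})

def InGcs (G : SimpleGraph V) : Prop :=
  ∀ w : V → ℝ, (∀ v, 0 < w v) → safeNumber G w = connSafeNumber G w

/-
If `G - S` is connected, it is adjacent to every component of `G[S]` (as `G` is connected), so
safety of `S` gives `w(V ∖ S) ≤ w(C)` for every component `C` of `G[S]`. Either `G[S]` is
connected and `S` is already a connected safe set, or we take a heaviest component `C₁` and a
second component `C₂`: then `T = (V ∖ S) ∪ C₁` induces a connected graph, and every component of
`G - T` lies in a component of `G[S]`, so weighs at most `w(C₁) ≤ w(T)`. Thus `T` is a connected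
safe set of weight `w(V ∖ S) + w(C₁) ≤ w(C₂) + w(C₁) ≤ w(S)`. Either way `cs(G,w) ≤ w(S) = s(G,w)`.
-/

section Weight

variable {w : V → ℝ}

lemma setWeight_eq_sum_indicator (w : V → ℝ) (A : Set V) :
    setWeight w A = ∑ v, A.indicator w v := rfl

lemma setWeight_mono (hw : ∀ v, 0 ≤ w v) {A B : Set V} (h : A ⊆ B) :
    setWeight w A ≤ setWeight w B :=
  Finset.sum_le_sum fun v _ => Set.indicator_le_indicator_of_subset h hw v

lemma setWeight_union {A B : Set V} (h : Disjoint A B) :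
    setWeight w (A ∪ B) = setWeight w A + setWeight w B := by
  simp only [setWeight_eq_sum_indicator, Set.indicator_union_of_disjoint h,
    Finset.sum_add_distrib]

end Weight

section Components

omit [Fintype V]

variable {G : SimpleGraph V} {S : Set V}

def inducedComponent (G : SimpleGraph V) (S : Set V) (c : (G.induce S).ConnectedComponent) :
    Set V :=
  Subtype.val '' c.supp

lemma isComponentOf_inducedComponent (c : (G.induce S).ConnectedComponent) :
    IsComponentOf G S (inducedComponent G S c) :=
  ⟨c, rfl⟩

lemma mem_inducedComponent {c : (G.induce S).ConnectedComponent} {v : V} :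
    v ∈ inducedComponent G S c ↔ ∃ h : v ∈ S, (G.induce S).connectedComponentMk ⟨v, h⟩ = c := by
  simp [inducedComponent, ConnectedComponent.mem_supp_iff]

lemma inducedComponent_subset (c : (G.induce S).ConnectedComponent) :
    inducedComponent G S c ⊆ S :=
  Subtype.coe_image_subset _ _

lemma inducedComponent_nonempty (c : (G.induce S).ConnectedComponent) :
    (inducedComponent G S c).Nonempty :=
  c.nonempty_supp.image _

lemma disjoint_inducedComponent {c c' : (G.induce S).ConnectedComponent} (h : c ≠ c') :
    Disjoint (inducedComponent G S c) (inducedComponent G S c') :=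
  (Set.disjoint_image_iff Subtype.val_injective).mpr
    (pairwise_disjoint_supp_connectedComponent _ h)

lemma connected_induce_inducedComponent (c : (G.induce S).ConnectedComponent) :
    (G.induce (inducedComponent G S c)).Connected :=
  c.connected_toSimpleGraph.map ⟨fun x => ⟨x.1.1, x.1, x.2, rfl⟩, id⟩
    (by rintro ⟨_, x, hx, rfl⟩; exact ⟨⟨x, hx⟩, rfl⟩)

lemma inducedComponent_eq_of_connected (h : (G.induce S).Connected)
    (c : (G.induce S).ConnectedComponent) : inducedComponent G S c = S := by
  have := h.preconnected.subsingleton_connectedComponent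
  ext v
  exact mem_inducedComponent.trans ⟨fun ⟨hv, _⟩ => hv, fun hv => ⟨hv, Subsingleton.elim _ _⟩⟩

lemma isComponentOf_self (h : (G.induce S).Connected) : IsComponentOf G S S :=
  ⟨(G.induce S).connectedComponentMk h.nonempty.some,
    (inducedComponent_eq_of_connected h _).symm⟩

lemma mem_inducedComponent_of_adj {c : (G.induce S).ConnectedComponent} {a b : V}
    (ha : a ∈ inducedComponent G S c) (hb : b ∈ S) (hab : G.Adj a b) :
    b ∈ inducedComponent G S c := by
  obtain ⟨ha', rfl⟩ := mem_inducedComponent.mp ha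
  exact mem_inducedComponent.mpr ⟨hb, (ConnectedComponent.connectedComponentMk_eq_of_adj
    (show (G.induce S).Adj ⟨a, ha'⟩ ⟨b, hb⟩ from hab)).symm⟩

lemma touches_inducedComponent_compl (hG : G.Connected) (hS : S ≠ Set.univ)
    (c : (G.induce S).ConnectedComponent) : Touches G (inducedComponent G S c) Sᶜ := by
  obtain ⟨x, hx⟩ := inducedComponent_nonempty c
  obtain ⟨y, hy⟩ := Set.nonempty_compl.mpr hS
  obtain ⟨d, -, hd, hd'⟩ := (hG.preconnected x y).some.exists_boundary_dart _ hx
    fun hy' => hy (inducedComponent_subset c hy')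
  exact ⟨d.fst, hd, d.snd, fun h => hd' (mem_inducedComponent_of_adj hd h d.adj), d.adj⟩

lemma exists_inducedComponent_superset {T : Set V} (hTS : T ⊆ S)
    (d : (G.induce T).ConnectedComponent) :
    ∃ c : (G.induce S).ConnectedComponent, inducedComponent G T d ⊆ inducedComponent G S c := by
  obtain ⟨⟨x, hx⟩, rfl⟩ := d.exists_rep
  refine ⟨(G.induce S).connectedComponentMk ⟨x, hTS hx⟩, fun v hv => ?_⟩
  obtain ⟨hv, hxv⟩ := mem_inducedComponent.mp hv
  refine mem_inducedComponent.mpr ⟨hTS hv, ConnectedComponent.sound ?_⟩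
  exact (ConnectedComponent.exact hxv).map (G.induceHomOfLE hTS).toHom

end Components

section SafeSets

variable {G : SimpleGraph V} {w : V → ℝ} {S T : Set V}

lemma connSafeNumber_le (h : IsConnSafeSet G w T) : connSafeNumber G w ≤ setWeight w T :=
  csInf_le ((Set.toFinite _).image _).bddBelow ⟨T, h, rfl⟩

lemma isConnSafeSet_of_forall_weight_le (hT : T.Nonempty) (hTu : T ≠ Set.univ)
    (hconn : (G.induce T).Connected)
    (h : ∀ d, setWeight w (inducedComponent G Tᶜ d) ≤ setWeight w T) : IsConnSafeSet G w T := by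
  refine ⟨⟨hT, hTu, ?_⟩, hconn⟩
  rintro _ _ ⟨c, rfl⟩ ⟨d, rfl⟩ -
  change setWeight w (inducedComponent G Tᶜ d) ≤ setWeight w (inducedComponent G T c)
  rw [inducedComponent_eq_of_connected hconn]
  exact h d

lemma IsSafeSet.weight_compl_le (hG : G.Connected) (hS : IsSafeSet G w S)
    (hSc : (G.induce Sᶜ).Connected) (c : (G.induce S).ConnectedComponent) :
    setWeight w Sᶜ ≤ setWeight w (inducedComponent G S c) :=
  hS.2.2 _ _ (isComponentOf_inducedComponent c) (isComponentOf_self hSc)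
    (touches_inducedComponent_compl hG hS.2.1 c)

lemma isConnSafeSet_compl_union_inducedComponent (hG : G.Connected) (hw : ∀ v, 0 ≤ w v)
    (hSc : (G.induce Sᶜ).Connected) {c₁ c₂ : (G.induce S).ConnectedComponent} (hc : c₂ ≠ c₁)
    (hmax : ∀ c, setWeight w (inducedComponent G S c) ≤ setWeight w (inducedComponent G S c₁)) :
    IsConnSafeSet G w (Sᶜ ∪ inducedComponent G S c₁) := by
  set C₁ := inducedComponent G S c₁
  have hS : S ≠ Set.univ := Set.nonempty_compl.mp (Set.nonempty_coe_sort.mp hSc.nonempty)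
  obtain ⟨a, ha, b, hb, hab⟩ := touches_inducedComponent_compl hG hS c₁
  have hconn : (G.induce (Sᶜ ∪ C₁)).Connected :=
    connected_induce_union hSc.preconnected (connected_induce_inducedComponent c₁).preconnected
      hb ha hab.symm
  have hne : Sᶜ ∪ C₁ ≠ Set.univ := by
    obtain ⟨v, hv⟩ := inducedComponent_nonempty c₂
    refine fun h => (h ▸ Set.mem_univ v).elim (fun hv' => hv' (inducedComponent_subset c₂ hv))
      fun hv' => Set.disjoint_left.mp (disjoint_inducedComponent hc) hv hv'
  refine isConnSafeSet_of_forall_weight_le ⟨b, .inl hb⟩ hne hconn fun d => ?_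
  obtain ⟨c, hc⟩ := exists_inducedComponent_superset
    (Set.compl_subset_comm.mp Set.subset_union_left) d
  calc setWeight w (inducedComponent G (Sᶜ ∪ C₁)ᶜ d)
      ≤ setWeight w (inducedComponent G S c) := setWeight_mono hw hc
    _ ≤ setWeight w C₁ := hmax c
    _ ≤ setWeight w (Sᶜ ∪ C₁) := setWeight_mono hw Set.subset_union_right

theorem IsSafeSet.exists_isConnSafeSet_weight_le (hG : G.Connected) (hw : ∀ v, 0 ≤ w v)
    (hS : IsSafeSet G w S) (hSc : (G.induce Sᶜ).Connected) :
    ∃ T, IsConnSafeSet G w T ∧ setWeight w T ≤ setWeight w S := by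
  by_cases hSconn : (G.induce S).Connected
  · exact ⟨S, ⟨hS, hSconn⟩, le_rfl⟩
  have : Nonempty S := hS.1.to_subtype
  obtain ⟨c₁, hmax⟩ := Finite.exists_max fun c => setWeight w (inducedComponent G S c)
  obtain ⟨c₂, hc⟩ : ∃ c₂, c₂ ≠ c₁ := by
    by_contra! h
    exact hSconn ⟨fun x y => ConnectedComponent.exact ((h _).trans (h _).symm)⟩
  refine ⟨_, isConnSafeSet_compl_union_inducedComponent hG hw hSc hc hmax, ?_⟩
  have hdisj : Disjoint (inducedComponent G S c₂) (inducedComponent G S c₁) :=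
    disjoint_inducedComponent hc
  calc setWeight w (Sᶜ ∪ inducedComponent G S c₁)
      = setWeight w Sᶜ + setWeight w (inducedComponent G S c₁) :=
        setWeight_union (disjoint_compl_left.mono_right (inducedComponent_subset c₁))
    _ ≤ setWeight w (inducedComponent G S c₂) + setWeight w (inducedComponent G S c₁) := by
        gcongr; exact hS.weight_compl_le hG hSc c₂
    _ = setWeight w (inducedComponent G S c₂ ∪ inducedComponent G S c₁) :=
        (setWeight_union hdisj).symm
    _ ≤ setWeight w S := setWeight_mono hw <|
        Set.union_subset (inducedComponent_subset c₂) (inducedComponent_subset c₁)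

end SafeSets

theorem stmt_3 (G : SimpleGraph V) (hG : G.Connected) (w : V → ℝ) (hw : ∀ v, 0 < w v)
    (hlt : safeNumber G w < connSafeNumber G w) (S : Set V)
    (hS : IsSafeSet G w S) (hmin : setWeight w S = safeNumber G w) :
    ¬ (G.induce Sᶜ).Connected := by
  intro hSc
  obtain ⟨T, hT, hTS⟩ := hS.exists_isConnSafeSet_weight_le hG (fun v => (hw v).le) hSc
  linarith [connSafeNumber_le hT]
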